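/- Let ζ₁, ζ₂, ζ₃, ζ₁₂, ζ₂₃, ζ₁₂₃ be independent with ζ₁,ζ₃ ~ NB(θ(1-ρ),p), ζ₂ ~ NB(θ(1-ρ)²,p), ζ₁₂,ζ₂₃ ~ NB(θρ(1-ρ),p), ζ₁₂₃ ~ NB(θρ²,p), and set X₁ = ζ₁+ζ₁₂+ζ₁₂₃, X₂ = ζ₂+ζ₁₂+ζ₂₃+ζ₁₂₃, X₃ = ζ₃+ζ₂₃+ζ₁₂₃. Then P[X₁=0, X₃=0 | X₂=2] = [p^{θ(1-ρ)}(1-ρ)]² · (1+θ(1-ρ)²)/(1+θ). -/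

import Mathlib

/-!
On the event `X₁ = X₃ = 0, X₂ = 2` every component except `ζ₂` vanishes, so the numerator is the
single term `P[ζ₂ = 2, all other ζ = 0]`. The denominator is `P[X₂ = 2]`: the negative binomial
laws `NB(·, p)` form a convolution semigroup in the shape parameter (Chu–Vandermonde for
`Ring.multichoose`, since `NB(α, p)(k) = multichoose α k · p^α (1-p)^k`), so
`X₂ ~ NB((1-ρ)²θ + 2ρ(1-ρ)θ + ρ²θ, p) = NB(θ, p)`, while `ζ₁` and `ζ₃` integrate out by the
binomial series `∑ multichoose α k xᵏ = (1 - x)^(-α)`.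
-/

noncomputable def nbPmf (α p : ℝ) (k : ℕ) : ℝ :=
  Real.Gamma (α + k) / (Real.Gamma α * (Nat.factorial k)) * p ^ α * (1 - p) ^ k

/-- Joint pmf of the six independent components `(ζ₁, ζ₂, ζ₃, ζ₁₂, ζ₂₃, ζ₁₂₃)`. -/
noncomputable def rmJoint (θ ρ p : ℝ) : ℕ × ℕ × ℕ × ℕ × ℕ × ℕ → ℝ
  | (a, b, c, d, e, f) =>
      nbPmf (θ * (1 - ρ)) p a * nbPmf (θ * (1 - ρ) ^ 2) p b *
        nbPmf (θ * (1 - ρ)) p c * nbPmf (θ * ρ * (1 - ρ)) p d *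
        nbPmf (θ * ρ * (1 - ρ)) p e * nbPmf (θ * ρ ^ 2) p f

open Finset

namespace Real

theorem Gamma_add_nat_eq_mul_ascPochhammer {a : ℝ} (ha : ∀ k : ℕ, a ≠ -k) (n : ℕ) :
    Gamma (a + n) = Gamma a * (ascPochhammer ℝ n).eval a := by
  induction n with
  | zero => simp
  | succ n ih =>
    have hn : a + n ≠ 0 := fun h => ha n (by linarith)
    rw [Nat.cast_succ, ← add_assoc, Gamma_add_one hn, ih, ascPochhammer_succ_right]
    simp only [Polynomial.eval_mul, Polynomial.eval_add, Polynomial.eval_X,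
      Polynomial.eval_natCast]
    ring

theorem multichoose_eq_Gamma_div {a : ℝ} (ha : ∀ k : ℕ, a ≠ -k) (n : ℕ) :
    Ring.multichoose a n = Gamma (a + n) / (Gamma a * n.factorial) := by
  have hΓ : Gamma a ≠ 0 := Gamma_ne_zero fun m h => ha m h
  rw [Gamma_add_nat_eq_mul_ascPochhammer ha, ← Polynomial.ascPochhammer_smeval_eq_eval,
    ← Ring.factorial_nsmul_multichoose_eq_ascPochhammer, nsmul_eq_mul]
  field_simp

end Real

/-- From `Ring.add_choose_eq` at `-a, -b`, via `choose (-r) n = (-1)ⁿ • multichoose r n`. -/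
theorem Ring.multichoose_add {R : Type*} [CommRing R] [BinomialRing R] (a b : R) (n : ℕ) :
    Ring.multichoose (a + b) n =
      ∑ ij ∈ antidiagonal n, Ring.multichoose a ij.1 * Ring.multichoose b ij.2 := by
  have h := Ring.add_choose_eq n (Commute.all (-a) (-b))
  rw [← neg_add, Ring.choose_neg'] at h
  have hterm : ∀ ij ∈ antidiagonal n, Ring.choose (-a) ij.1 * Ring.choose (-b) ij.2 =
      Int.negOnePow n • (Ring.multichoose a ij.1 * Ring.multichoose b ij.2) := by
    intro ij hij
    rw [Ring.choose_neg', Ring.choose_neg', smul_mul_smul_comm, ← Int.negOnePow_add,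
      ← Nat.cast_add, mem_antidiagonal.mp hij]
  rw [sum_congr rfl hterm, ← smul_sum] at h
  exact (Int.negOnePow n).isUnit.smul_left_cancel.mp h

theorem HasSum.mul_of_nonneg {ι κ : Type*} {f : ι → ℝ} {g : κ → ℝ} {a b : ℝ} (hf : HasSum f a)
    (hg : HasSum g b) (hf0 : 0 ≤ f) (hg0 : 0 ≤ g) :
    HasSum (fun x : ι × κ => f x.1 * g x.2) (a * b) :=
  hf.mul hg (hf.summable.mul_of_nonneg hg.summable hf0 hg0)

theorem hasSum_ite_add_eq {R ι : Type*} [Semiring R] [TopologicalSpace R]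
    [IsTopologicalSemiring R] {f : ℕ → R} {g : ι → R} {s : ι → ℕ} {G : ℕ → R} {n : ℕ}
    (hg : ∀ j, HasSum (fun y => if s y = j then g y else 0) (G j)) :
    HasSum (fun x : ℕ × ι => if x.1 + s x.2 = n then f x.1 * g x.2 else 0)
      (∑ ij ∈ antidiagonal n, f ij.1 * G ij.2) := by
  have hslice : ∀ ij : ℕ × ℕ, HasSum
      (fun x : ℕ × ι => if (x.1, s x.2) = ij then f x.1 * g x.2 else 0) (f ij.1 * G ij.2) := by
    rintro ⟨i, j⟩
    rw [← (Prod.mk_right_injective i).hasSum_iff]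
    · simpa [Function.comp_def, mul_ite] using (hg j).mul_left (f i)
    · rintro ⟨k, y⟩ hy
      have hki : k ≠ i := fun h => hy ⟨y, by rw [h]⟩
      simp [hki]
  convert hasSum_sum fun ij _ => hslice ij with x
  simp only [sum_ite_eq, HasAntidiagonal.mem_antidiagonal]

section NegativeBinomial

variable {α β p : ℝ}

theorem nbPmf_eq_multichoose (hα : 0 < α) (p : ℝ) (k : ℕ) :
    nbPmf α p k = Ring.multichoose α k * p ^ α * (1 - p) ^ k := by
  rw [nbPmf, Real.multichoose_eq_Gamma_div fun m h => by linarith [m.cast_nonneg (α := ℝ)]]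

theorem nbPmf_nonneg (hα : 0 ≤ α) (hp0 : 0 ≤ p) (hp1 : p ≤ 1) (k : ℕ) : 0 ≤ nbPmf α p k := by
  have := Real.Gamma_nonneg_of_nonneg (by positivity : 0 ≤ α + k)
  have := Real.Gamma_nonneg_of_nonneg hα
  have : 0 ≤ 1 - p := by linarith
  unfold nbPmf
  positivity

theorem nbPmf_zero (hα : 0 < α) (p : ℝ) : nbPmf α p 0 = p ^ α := by
  rw [nbPmf_eq_multichoose hα, Ring.multichoose_zero_right]
  simp

theorem nbPmf_two (hα : 0 < α) (p : ℝ) :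
    nbPmf α p 2 = α * (α + 1) / 2 * p ^ α * (1 - p) ^ 2 := by
  have h2 : 2 * Ring.multichoose α 2 = α * (α + 1) := by
    have h := Ring.factorial_nsmul_multichoose_eq_ascPochhammer α 2
    rw [Polynomial.ascPochhammer_smeval_eq_eval] at h
    simpa [ascPochhammer_succ_right] using h
  rw [nbPmf_eq_multichoose hα]
  linear_combination (p ^ α * (1 - p) ^ 2 / 2) * h2

theorem hasSum_nbPmf (hα : 0 < α) (hp0 : 0 < p) (hp2 : p < 2) : HasSum (nbPmf α p) 1 := by
  have hx : 1 - p ∈ Metric.eball (0 : ℝ) 1 := by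
    rw [Metric.mem_eball, edist_zero_right, Real.enorm_eq_ofReal_abs, ENNReal.ofReal_lt_one,
      abs_lt]
    constructor <;> linarith
  have h := ((Real.one_div_one_sub_rpow_hasFPowerSeriesOnBall_zero α).hasSum hx).mul_right (p ^ α)
  simp only [FormalMultilinearSeries.ofScalars_apply_eq, smul_eq_mul, zero_add, one_div,
    sub_sub_cancel] at h
  rw [inv_mul_cancel₀ (Real.rpow_pos_of_pos hp0 α).ne'] at h
  refine h.congr_fun fun k => ?_
  rw [nbPmf_eq_multichoose hα, Ring.multichoose_eq]
  ring

theorem nbPmf_add (hα : 0 < α) (hβ : 0 < β) (hp : 0 < p) (n : ℕ) :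
    nbPmf (α + β) p n = ∑ ij ∈ antidiagonal n, nbPmf α p ij.1 * nbPmf β p ij.2 := by
  rw [nbPmf_eq_multichoose (add_pos hα hβ), Ring.multichoose_add, Real.rpow_add hp, sum_mul,
    sum_mul]
  refine sum_congr rfl fun ij hij => ?_
  rw [nbPmf_eq_multichoose hα, nbPmf_eq_multichoose hβ, ← HasAntidiagonal.mem_antidiagonal.mp hij,
    pow_add]
  ring

end NegativeBinomial

theorem hasSum_ite_nbPmf_prod_eq {a₁ a₂ a₃ a₄ a₅ a₆ p : ℝ} (h₁ : 0 < a₁) (h₂ : 0 < a₂)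
    (h₃ : 0 < a₃) (h₄ : 0 < a₄) (h₅ : 0 < a₅) (h₆ : 0 < a₆) (hp0 : 0 < p) (hp1 : p < 1)
    (n : ℕ) :
    HasSum (fun v : ℕ × ℕ × ℕ × ℕ × ℕ × ℕ =>
        if v.2.1 + v.2.2.2.1 + v.2.2.2.2.1 + v.2.2.2.2.2 = n then
          nbPmf a₁ p v.1 * nbPmf a₂ p v.2.1 * nbPmf a₃ p v.2.2.1 * nbPmf a₄ p v.2.2.2.1 *
            nbPmf a₅ p v.2.2.2.2.1 * nbPmf a₆ p v.2.2.2.2.2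
        else 0)
      (nbPmf (a₂ + (a₄ + (a₅ + a₆))) p n) := by
  have h0 : ∀ {a : ℝ}, 0 < a → ∀ k, 0 ≤ nbPmf a p k := fun ha =>
    nbPmf_nonneg ha.le hp0.le hp1.le
  have h56 : ∀ j, HasSum (fun y : ℕ × ℕ =>
      if y.1 + y.2 = j then nbPmf a₅ p y.1 * nbPmf a₆ p y.2 else 0) (nbPmf (a₅ + a₆) p j) := by
    intro j
    rw [nbPmf_add h₅ h₆ hp0]
    refine hasSum_ite_add_eq (s := id) fun k => (hasSum_ite_eq k (nbPmf a₆ p k)).congr_fun ?_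
    intro y
    split_ifs with h <;> simp_all
  have h456 : ∀ j, HasSum (fun y : ℕ × ℕ × ℕ =>
      if y.1 + (y.2.1 + y.2.2) = j then nbPmf a₄ p y.1 * (nbPmf a₅ p y.2.1 * nbPmf a₆ p y.2.2)
        else 0) (nbPmf (a₄ + (a₅ + a₆)) p j) := by
    intro j
    rw [nbPmf_add h₄ (add_pos h₅ h₆) hp0]
    exact (hasSum_ite_add_eq (s := fun y : ℕ × ℕ => y.1 + y.2) h56 :)
  have h3456 : ∀ j, HasSum (fun y : ℕ × ℕ × ℕ × ℕ =>
      if y.2.1 + (y.2.2.1 + y.2.2.2) = j then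
        nbPmf a₃ p y.1 * (nbPmf a₄ p y.2.1 * (nbPmf a₅ p y.2.2.1 * nbPmf a₆ p y.2.2.2)) else 0)
      (nbPmf (a₄ + (a₅ + a₆)) p j) := by
    intro j
    have h := (hasSum_nbPmf h₃ hp0 (by linarith)).mul_of_nonneg (h456 j) (h0 h₃)
      fun y => ite_nonneg (mul_nonneg (h0 h₄ _) (mul_nonneg (h0 h₅ _) (h0 h₆ _))) le_rfl
    simpa only [mul_ite, mul_zero, one_mul] using h
  have h23456 : HasSum (fun y : ℕ × ℕ × ℕ × ℕ × ℕ =>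
      if y.1 + (y.2.2.1 + (y.2.2.2.1 + y.2.2.2.2)) = n then
        nbPmf a₂ p y.1 * (nbPmf a₃ p y.2.1 * (nbPmf a₄ p y.2.2.1 *
          (nbPmf a₅ p y.2.2.2.1 * nbPmf a₆ p y.2.2.2.2))) else 0)
      (nbPmf (a₂ + (a₄ + (a₅ + a₆))) p n) := by
    rw [nbPmf_add h₂ (by positivity) hp0]
    exact (hasSum_ite_add_eq (s := fun y : ℕ × ℕ × ℕ × ℕ => y.2.1 + (y.2.2.1 + y.2.2.2))
      h3456 :)
  have h123456 := (hasSum_nbPmf h₁ hp0 (by linarith)).mul_of_nonneg h23456 (h0 h₁) fun y =>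
    ite_nonneg (mul_nonneg (h0 h₂ _) (mul_nonneg (h0 h₃ _) (mul_nonneg (h0 h₄ _)
      (mul_nonneg (h0 h₅ _) (h0 h₆ _))))) le_rfl
  rw [one_mul] at h123456
  convert h123456 using 2 with v
  simp only [mul_ite, mul_zero, ← add_assoc]
  split_ifs <;> ring

theorem hasSum_rmJoint_X₂_eq {θ ρ p : ℝ} (hθ : 0 < θ) (hρ0 : 0 < ρ) (hρ1 : ρ < 1)
    (hp0 : 0 < p) (hp1 : p < 1) (n : ℕ) :
    HasSum (fun v : ℕ × ℕ × ℕ × ℕ × ℕ × ℕ =>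
        if v.2.1 + v.2.2.2.1 + v.2.2.2.2.1 + v.2.2.2.2.2 = n then rmJoint θ ρ p v else 0)
      (nbPmf θ p n) := by
  have hρ1' : 0 < 1 - ρ := by linarith
  have h := hasSum_ite_nbPmf_prod_eq (by positivity : 0 < θ * (1 - ρ))
    (by positivity : 0 < θ * (1 - ρ) ^ 2) (by positivity : 0 < θ * (1 - ρ))
    (by positivity : 0 < θ * ρ * (1 - ρ)) (by positivity : 0 < θ * ρ * (1 - ρ))
    (by positivity : 0 < θ * ρ ^ 2) hp0 hp1 n
  rw [show θ * (1 - ρ) ^ 2 + (θ * ρ * (1 - ρ) + (θ * ρ * (1 - ρ) + θ * ρ ^ 2)) = θ by ring] at h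
  convert h using 3 with v
  obtain ⟨a, b, c, d, e, f⟩ := v
  rfl

theorem tsum_rmJoint_X₁_X₃_zero_X₂_eq (θ ρ p : ℝ) (n : ℕ) :
    (∑' v : ℕ × ℕ × ℕ × ℕ × ℕ × ℕ,
        if v.1 + v.2.2.2.1 + v.2.2.2.2.2 = 0 ∧
            v.2.2.1 + v.2.2.2.2.1 + v.2.2.2.2.2 = 0 ∧
            v.2.1 + v.2.2.2.1 + v.2.2.2.2.1 + v.2.2.2.2.2 = n
          then rmJoint θ ρ p v else 0) = rmJoint θ ρ p (0, n, 0, 0, 0, 0) := by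
  rw [tsum_eq_single (0, n, 0, 0, 0, 0)]
  · simp
  · rintro ⟨a, b, c, d, e, f⟩ hv
    rw [if_neg]
    contrapose! hv
    simp only [Prod.mk.injEq] at hv ⊢
    omega

/-- For the random-measure NB process with `X₁ = ζ₁+ζ₁₂+ζ₁₂₃`,
`X₂ = ζ₂+ζ₁₂+ζ₂₃+ζ₁₂₃`, `X₃ = ζ₃+ζ₂₃+ζ₁₂₃`:
`P[X₁=0, X₃=0 | X₂=2] = [p^{θ(1-ρ)}(1-ρ)]² (1+θ(1-ρ)²)/(1+θ)`. -/
theorem nb_random_measure_cond_prob_020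
    (θ ρ p : ℝ) (hθ : 0 < θ) (hρ0 : 0 < ρ) (hρ1 : ρ < 1)
    (hp0 : 0 < p) (hp1 : p < 1) :
    (∑' v : ℕ × ℕ × ℕ × ℕ × ℕ × ℕ,
        if v.1 + v.2.2.2.1 + v.2.2.2.2.2 = 0 ∧
            v.2.2.1 + v.2.2.2.2.1 + v.2.2.2.2.2 = 0 ∧
            v.2.1 + v.2.2.2.1 + v.2.2.2.2.1 + v.2.2.2.2.2 = 2
          then rmJoint θ ρ p v else 0) /
      (∑' v : ℕ × ℕ × ℕ × ℕ × ℕ × ℕ,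
        if v.2.1 + v.2.2.2.1 + v.2.2.2.2.1 + v.2.2.2.2.2 = 2
          then rmJoint θ ρ p v else 0)
      = (p ^ (θ * (1 - ρ)) * (1 - ρ)) ^ 2 * (1 + θ * (1 - ρ) ^ 2) / (1 + θ) := by
  rw [tsum_rmJoint_X₁_X₃_zero_X₂_eq, (hasSum_rmJoint_X₂_eq hθ hρ0 hρ1 hp0 hp1 2).tsum_eq]
  have hρ1' : 0 < 1 - ρ := by linarith
  have hp1' : 0 < 1 - p := by linarith
  have hpθ : p ^ θ = p ^ (θ * (1 - ρ) ^ 2) * p ^ (θ * ρ * (1 - ρ)) * p ^ (θ * ρ * (1 - ρ)) *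
      p ^ (θ * ρ ^ 2) := by
    simp only [← Real.rpow_add hp0]
    ring_nf
  simp only [rmJoint, nbPmf_zero (by positivity : 0 < θ * (1 - ρ)),
    nbPmf_zero (by positivity : 0 < θ * ρ * (1 - ρ)), nbPmf_zero (by positivity : 0 < θ * ρ ^ 2),
    nbPmf_two hθ, nbPmf_two (by positivity : 0 < θ * (1 - ρ) ^ 2), hpθ]
  field_simp
  ring
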